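/- Let n ≥ 1 be a natural number and b₁, b₂, b₃ > 0 be real numbers. Let μ, s : Fin n → ℝ satisfy |μᵢ| ≤ b₂ and sᵢ ≥ 1/b₃ for every i, and let z, z⋆ : Fin n → ℝ satisfy |zᵢ| ≤ b₁ and |z⋆ᵢ| ≤ b₁ for every i. Then |ℓ(z; μ, s) − ℓ(z⋆; μ, s)| ≤ √n · (b₁ + b₂) · b₃² · ‖z − z⋆‖₂. -/

import Mathlib

/-! The two log-densities differ by `∑ᵢ ((z⋆ᵢ − μᵢ)² − (zᵢ − μᵢ)²) / (2 sᵢ²)`. Each numerator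
factors as `(z⋆ᵢ − zᵢ)(z⋆ᵢ + zᵢ − 2μᵢ)`, whose second factor is at most `2(b₁ + b₂)` in absolute
value, while `1 / sᵢ² ≤ b₃²`. So the difference is at most `(b₁ + b₂) b₃² ‖z − z⋆‖₁`, and
Cauchy–Schwarz gives `‖v‖₁ ≤ √n ‖v‖₂`. -/

/-- The diagonal-Gaussian log-density
`ℓ(z; μ, s) = −(n/2)·log(2π) − ∑ᵢ log sᵢ − ∑ᵢ (zᵢ − μᵢ)²/(2 sᵢ²)`. -/
noncomputable def gaussLogDensity (n : ℕ) (z μ s : Fin n → ℝ) : ℝ :=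
  -((n : ℝ) / 2) * Real.log (2 * Real.pi) - ∑ i, Real.log (s i)
    - ∑ i, (z i - μ i) ^ 2 / (2 * (s i) ^ 2)

theorem gaussLogDensity_sub_gaussLogDensity (n : ℕ) (z z' μ s : Fin n → ℝ) :
    gaussLogDensity n z μ s - gaussLogDensity n z' μ s =
      ∑ i, ((z' i - μ i) ^ 2 - (z i - μ i) ^ 2) / (2 * s i ^ 2) := by
  simp only [gaussLogDensity, sub_div, Finset.sum_sub_distrib]
  ring

theorem abs_sub_sq_sub_sub_sq_le {x y m a b : ℝ} (hx : |x| ≤ a) (hy : |y| ≤ a) (hm : |m| ≤ b) :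
    |(y - m) ^ 2 - (x - m) ^ 2| ≤ 2 * (a + b) * |x - y| := by
  have hsum : |y + x - 2 * m| ≤ 2 * (a + b) := by
    calc |y + x - 2 * m| ≤ |y| + |x| + |2 * m| :=
          (abs_sub _ _).trans (by gcongr; exact abs_add_le _ _)
      _ ≤ 2 * (a + b) := by rw [abs_mul, abs_two]; linarith
  calc |(y - m) ^ 2 - (x - m) ^ 2| = |y + x - 2 * m| * |x - y| := by
        rw [abs_sub_comm x, ← abs_mul]; congr 1; ring
    _ ≤ 2 * (a + b) * |x - y| := by gcongr

theorem one_div_sq_le_sq_of_one_div_le {σ c : ℝ} (hc : 0 < c) (hσ : 1 / c ≤ σ) :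
    1 / σ ^ 2 ≤ c ^ 2 := by
  have hσpos : 0 < σ := (one_div_pos.mpr hc).trans_le hσ
  rw [← one_div_pow]
  gcongr
  exact (one_div_le hσpos hc).mpr hσ

theorem sum_abs_le_sqrt_card_mul_norm {ι : Type*} [Fintype ι] (x : EuclideanSpace ℝ ι) :
    ∑ i, |x i| ≤ √(Fintype.card ι) * ‖x‖ := by
  simpa [EuclideanSpace.norm_eq] using
    Real.sum_mul_le_sqrt_mul_sqrt Finset.univ (fun _ => (1 : ℝ)) (fun i => |x i|)

theorem abs_sub_sq_sub_sub_sq_div_le {x y m σ a b c : ℝ} (hx : |x| ≤ a) (hy : |y| ≤ a)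
    (hm : |m| ≤ b) (hc : 0 < c) (hσ : 1 / c ≤ σ) :
    |((y - m) ^ 2 - (x - m) ^ 2) / (2 * σ ^ 2)| ≤ (a + b) * c ^ 2 * |x - y| := by
  have hab : 0 ≤ a + b := by linarith [abs_nonneg x, abs_nonneg m]
  have hσpos : 0 < σ := (one_div_pos.mpr hc).trans_le hσ
  calc |((y - m) ^ 2 - (x - m) ^ 2) / (2 * σ ^ 2)|
      = |(y - m) ^ 2 - (x - m) ^ 2| * (1 / σ ^ 2) / 2 := by
        rw [abs_div, abs_of_pos (by positivity : (0 : ℝ) < 2 * σ ^ 2)]; field_simp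
    _ ≤ 2 * (a + b) * |x - y| * c ^ 2 / 2 := by
        gcongr
        exacts [abs_sub_sq_sub_sub_sq_le hx hy hm, one_div_sq_le_sq_of_one_div_le hc hσ]
    _ = (a + b) * c ^ 2 * |x - y| := by ring

theorem gauss_log_density_latent_lipschitz_general
    (n : ℕ)
    (b₁ b₂ b₃ : ℝ) (hb₁ : 0 < b₁) (hb₂ : 0 < b₂) (hb₃ : 0 < b₃)
    (μ s : Fin n → ℝ)
    (hμ : ∀ i, |μ i| ≤ b₂) (hs : ∀ i, 1 / b₃ ≤ s i)
    (z zstar : EuclideanSpace ℝ (Fin n))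
    (hz : ∀ i, |z i| ≤ b₁) (hzstar : ∀ i, |zstar i| ≤ b₁) :
    |gaussLogDensity n z μ s - gaussLogDensity n zstar μ s| ≤
      Real.sqrt n * (b₁ + b₂) * b₃ ^ 2 * ‖z - zstar‖ := by
  rw [gaussLogDensity_sub_gaussLogDensity]
  calc |∑ i, ((zstar i - μ i) ^ 2 - (z i - μ i) ^ 2) / (2 * s i ^ 2)|
      ≤ ∑ i, |((zstar i - μ i) ^ 2 - (z i - μ i) ^ 2) / (2 * s i ^ 2)| :=
        Finset.abs_sum_le_sum_abs _ _
    _ ≤ ∑ i, (b₁ + b₂) * b₃ ^ 2 * |(z - zstar) i| := by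
        gcongr with i
        exact abs_sub_sq_sub_sub_sq_div_le (hz i) (hzstar i) (hμ i) hb₃ (hs i)
    _ = (b₁ + b₂) * b₃ ^ 2 * ∑ i, |(z - zstar) i| := (Finset.mul_sum _ _ _).symm
    _ ≤ (b₁ + b₂) * b₃ ^ 2 * (√n * ‖z - zstar‖) := by
        gcongr
        simpa using sum_abs_le_sqrt_card_mul_norm (z - zstar)
    _ = √n * (b₁ + b₂) * b₃ ^ 2 * ‖z - zstar‖ := by ring

/-- With the Gaussian parameters held fixed, the diagonal-Gaussian
log-density is `√n·(b₁+b₂)·b₃²`-Lipschitz in the latent `z` (Euclidean norm) on the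
sup-norm ball of radius `b₁`. -/
theorem gauss_log_density_latent_lipschitz
    (n : ℕ) (hn : 1 ≤ n)
    (b₁ b₂ b₃ : ℝ) (hb₁ : 0 < b₁) (hb₂ : 0 < b₂) (hb₃ : 0 < b₃)
    (μ s : Fin n → ℝ)
    (hμ : ∀ i, |μ i| ≤ b₂) (hs : ∀ i, 1 / b₃ ≤ s i)
    (z zstar : EuclideanSpace ℝ (Fin n))
    (hz : ∀ i, |z i| ≤ b₁) (hzstar : ∀ i, |zstar i| ≤ b₁) :
    |gaussLogDensity n z μ s - gaussLogDensity n zstar μ s| ≤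
      Real.sqrt n * (b₁ + b₂) * b₃ ^ 2 * ‖z - zstar‖ :=
  gauss_log_density_latent_lipschitz_general n b₁ b₂ b₃ hb₁ hb₂ hb₃ μ s hμ hs z zstar hz hzstar
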